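/- Let A be a commutative ring and n ≥ 1. Let 𝒢ₙ(A) be the group (GL_n(A) × Aˣ) ⋊ {1, j}, the semidirect product in which j has order 2 and acts by j(g, a)j = (a·(gᵀ)⁻¹, a); let 𝒢ₙ⁰(A) = GL_n(A) × Aˣ, an index-2 subgroup, and let ν : 𝒢ₙ(A) → Aˣ be the group homomorphism with ν(g, a) = a and ν(j) = −1. Let Γ be a group, Δ a subgroup of Γ of index 2, and c ∈ Γ ∖ Δ with c² = 1. Then there is a bijection between: (1) group homomorphisms r : Γ → 𝒢ₙ(A) with r⁻¹(𝒢ₙ⁰(A)) = Δ; and (2) triples (ρ, η, ⟨·,·⟩), where ρ : Δ → GL_n(A) and η : Γ → Aˣ are group homomorphisms and ⟨·,·⟩ is a perfect A-bilinear pairing on Aⁿ satisfying ⟨ρ(δ)a, ρ(cδc)b⟩ = η(δ)⟨a, b⟩ and ⟨a, b⟩ = −η(c)⟨b, a⟩ for all a, b ∈ Aⁿ and δ ∈ Δ. Under this bijection, ρ(δ) is the GL_n-component of r(δ) for δ ∈ Δ, η = ν ∘ r, and ⟨a, b⟩ = ᵗa · P⁻¹ · b, where P ∈ GL_n(A) is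 determined by r(c) = (P, −η(c))·j. -/
import Mathlib


open Matrix
open scoped MatrixGroups

namespace CHT

variable (n : ℕ) (A : Type*) [CommRing A]

/-- The transpose of an invertible matrix, as an invertible matrix. -/
def transposeUnit (g : GL (Fin n) A) : GL (Fin n) A where
  val := g.valᵀ
  inv := g.invᵀ
  val_inv := by rw [← Matrix.transpose_mul, g.inv_val, Matrix.transpose_one]
  inv_val := by rw [← Matrix.transpose_mul, g.val_inv, Matrix.transpose_one]

/-- The scalar matrix attached to a unit `a ∈ Aˣ`, as an invertible matrix. -/
def scalarUnit (a : Aˣ) : GL (Fin n) A :=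
  Units.map (algebraMap A (Matrix (Fin n) (Fin n) A)).toMonoidHom a

lemma scalarUnit_mul (a b : Aˣ) :
    scalarUnit n A (a * b) = scalarUnit n A a * scalarUnit n A b :=
  map_mul _ a b

lemma scalarUnit_commute (a : Aˣ) (g : GL (Fin n) A) :
    Commute (scalarUnit n A a) g := by
  refine Units.ext ?_
  show (algebraMap A (Matrix (Fin n) (Fin n) A) a) * g.val
      = g.val * (algebraMap A (Matrix (Fin n) (Fin n) A) a)
  exact Algebra.commutes _ _

lemma transposeUnit_mul (g h : GL (Fin n) A) :
    transposeUnit n A (g * h) = transposeUnit n A h * transposeUnit n A g := by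
  refine Units.ext ?_
  show (g.val * h.val)ᵀ = h.valᵀ * g.valᵀ
  exact Matrix.transpose_mul _ _

lemma transposeUnit_inv (g : GL (Fin n) A) :
    transposeUnit n A g⁻¹ = (transposeUnit n A g)⁻¹ :=
  Units.ext rfl

lemma transposeUnit_transposeUnit (g : GL (Fin n) A) :
    transposeUnit n A (transposeUnit n A g) = g :=
  Units.ext (Matrix.transpose_transpose _)

lemma transposeUnit_scalarUnit (a : Aˣ) :
    transposeUnit n A (scalarUnit n A a) = scalarUnit n A a := by
  refine Units.ext ?_
  show (algebraMap A (Matrix (Fin n) (Fin n) A) a)ᵀ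
      = algebraMap A (Matrix (Fin n) (Fin n) A) a
  simp [Matrix.algebraMap_eq_diagonal]

/-- The underlying function of conjugation by `j`: `(g, a) ↦ (a·(gᵀ)⁻¹, a)`. -/
def jFun (x : GL (Fin n) A × Aˣ) : GL (Fin n) A × Aˣ :=
  (scalarUnit n A x.2 * (transposeUnit n A x.1)⁻¹, x.2)

lemma jFun_jFun (x : GL (Fin n) A × Aˣ) : jFun n A (jFun n A x) = x := by
  refine Prod.ext ?_ rfl
  show scalarUnit n A x.2 *
      (transposeUnit n A (scalarUnit n A x.2 * (transposeUnit n A x.1)⁻¹))⁻¹ = x.1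
  rw [transposeUnit_mul, transposeUnit_inv, transposeUnit_transposeUnit,
    transposeUnit_scalarUnit]
  group

/-- The order-two automorphism `(g, a) ↦ (a·(gᵀ)⁻¹, a)` of `GLₙ(A) × Aˣ`,
i.e. conjugation by `j`. -/
def jAut : MulAut (GL (Fin n) A × Aˣ) where
  toFun := jFun n A
  invFun := jFun n A
  left_inv := jFun_jFun n A
  right_inv := jFun_jFun n A
  map_mul' x y := by
    refine Prod.ext ?_ rfl
    show scalarUnit n A (x.2 * y.2) * (transposeUnit n A (x.1 * y.1))⁻¹
        = scalarUnit n A x.2 * (transposeUnit n A x.1)⁻¹ *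
            (scalarUnit n A y.2 * (transposeUnit n A y.1)⁻¹)
    rw [scalarUnit_mul, transposeUnit_mul, _root_.mul_inv_rev]
    exact (scalarUnit_commute n A y.2 (transposeUnit n A x.1)⁻¹).mul_mul_mul_comm _ _

lemma jAut_sq : jAut n A * jAut n A = 1 :=
  MulEquiv.ext (jFun_jFun n A)

/-- The action of `{1, j} ≅ ℤ/2` on `GLₙ(A) × Aˣ` by `j(g, a)j = (a·(gᵀ)⁻¹, a)`. -/
def jHom : Multiplicative (ZMod 2) →* MulAut (GL (Fin n) A × Aˣ) where
  toFun z := jAut n A ^ (Multiplicative.toAdd z).val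
  map_one' := by
    show jAut n A ^ (Multiplicative.toAdd (1 : Multiplicative (ZMod 2))).val = 1
    rw [show (Multiplicative.toAdd (1 : Multiplicative (ZMod 2))).val = 0 from rfl, pow_zero]
  map_mul' z w := by
    have h01 : ∀ x : ZMod 2, x = 0 ∨ x = 1 := by decide
    have hsq := jAut_sq n A
    have v0 : ((0 : ZMod 2)).val = 0 := rfl
    have v1 : ((1 : ZMod 2)).val = 1 := rfl
    have v00 : ((0 : ZMod 2) + 0).val = 0 := rfl
    have v01 : ((0 : ZMod 2) + 1).val = 1 := rfl
    have v10 : ((1 : ZMod 2) + 0).val = 1 := rfl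
    have v11 : ((1 : ZMod 2) + 1).val = 0 := rfl
    show jAut n A ^ (Multiplicative.toAdd (z * w)).val
        = jAut n A ^ (Multiplicative.toAdd z).val * jAut n A ^ (Multiplicative.toAdd w).val
    rw [show Multiplicative.toAdd (z * w) = Multiplicative.toAdd z + Multiplicative.toAdd w
      from rfl]
    rcases h01 (Multiplicative.toAdd z) with hz | hz <;>
        rcases h01 (Multiplicative.toAdd w) with hw | hw
    · rw [hz, hw, v00, v0]; simp
    · rw [hz, hw, v01, v0, v1]; simp
    · rw [hz, hw, v10, v1, v0]; simp
    · rw [hz, hw, v11, v1, pow_zero, pow_one]; exact hsq.symm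

/-- The Clozel–Harris–Taylor group `𝒢ₙ(A) = (GLₙ(A) × Aˣ) ⋊ {1, j}`. -/
abbrev Gn := (GL (Fin n) A × Aˣ) ⋊[jHom n A] Multiplicative (ZMod 2)

/-- The index-two subgroup `𝒢ₙ⁰(A) = GLₙ(A) × Aˣ` of `𝒢ₙ(A)`. -/
def G0 : Subgroup (Gn n A) :=
  (SemidirectProduct.rightHom : Gn n A →* Multiplicative (ZMod 2)).ker

/-- The element `j ∈ 𝒢ₙ(A)`. -/
def jElem : Gn n A := ⟨1, Multiplicative.ofAdd 1⟩

lemma jAut_pow_apply_snd (k : ℕ) (l : GL (Fin n) A × Aˣ) :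
    ((jAut n A ^ k) l).2 = l.2 := by
  induction k generalizing l with
  | zero => rfl
  | succ k ih =>
    rw [pow_succ']
    show (jAut n A ((jAut n A ^ k) l)).2 = l.2
    rw [show (jAut n A ((jAut n A ^ k) l)).2 = ((jAut n A ^ k) l).2 from rfl, ih]

lemma neg_one_pow_val_add (a b : ZMod 2) :
    ((-1 : Aˣ)) ^ ((a + b).val) = (-1) ^ a.val * (-1) ^ b.val := by
  have h01 : ∀ x : ZMod 2, x = 0 ∨ x = 1 := by decide
  rcases h01 a with ha | ha <;> rcases h01 b with hb | hb <;> subst ha <;> subst hb <;>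
    simp [show ((0 : ZMod 2) + 0).val = 0 from rfl, show ((0 : ZMod 2) + 1).val = 1 from rfl,
      show ((1 : ZMod 2) + 0).val = 1 from rfl, show ((1 : ZMod 2) + 1).val = 0 from rfl,
      show ((0 : ZMod 2)).val = 0 from rfl, show ((1 : ZMod 2)).val = 1 from rfl]

/-- The multiplier homomorphism `ν : 𝒢ₙ(A) → Aˣ`, with `ν(g, a) = a` and `ν(j) = −1`. -/
def nu : Gn n A →* Aˣ where
  toFun x := x.left.2 * (-1) ^ (Multiplicative.toAdd x.right).val
  map_one' := by simp
  map_mul' x y := by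
    show (x * y).left.2 * (-1) ^ (Multiplicative.toAdd (x * y).right).val
        = x.left.2 * (-1) ^ (Multiplicative.toAdd x.right).val *
            (y.left.2 * (-1) ^ (Multiplicative.toAdd y.right).val)
    rw [SemidirectProduct.mul_left, SemidirectProduct.mul_right, Prod.snd_mul,
      show (jHom n A x.right) y.left = (jAut n A ^ (Multiplicative.toAdd x.right).val) y.left
        from rfl,
      jAut_pow_apply_snd,
      show Multiplicative.toAdd (x.right * y.right)
          = Multiplicative.toAdd x.right + Multiplicative.toAdd y.right from rfl,
      neg_one_pow_val_add]
    exact mul_mul_mul_comm _ _ _ _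

/-- A triple `(ρ, η, ⟨·,·⟩)` consisting of homomorphisms `ρ : Δ → GLₙ(A)`,
`η : Γ → Aˣ` and a perfect `A`-bilinear pairing on `Aⁿ` satisfying
`⟨ρ(δ)a, ρ(cδc)b⟩ = η(δ)⟨a, b⟩` and `⟨a, b⟩ = −η(c)⟨b, a⟩`. -/
structure GnTriple {Γ : Type*} [Group Γ] (n : ℕ) (A : Type*) [CommRing A]
    (Δ : Subgroup Γ) (c : Γ) where
  ρ : Δ →* GL (Fin n) A
  η : Γ →* Aˣ
  pair : (Fin n → A) →ₗ[A] (Fin n → A) →ₗ[A] A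
  perfect : Function.Bijective fun a : Fin n → A => pair a
  compat : ∀ (δ δ' : Δ), (δ' : Γ) = c * (δ : Γ) * c → ∀ a b : Fin n → A,
    pair ((ρ δ).val.mulVec a) ((ρ δ').val.mulVec b) = ((η (δ : Γ)) : A) * pair a b
  skew : ∀ a b : Fin n → A, pair a b = -((η c : Aˣ) : A) * pair b a


section Aux0

variable (n : ℕ) (A : Type*) [CommRing A]

/-- The nontrivial element of `Multiplicative (ZMod 2)`. -/
abbrev sElem : Multiplicative (ZMod 2) := Multiplicative.ofAdd 1

lemma sElem_cases (x : Multiplicative (ZMod 2)) : x = 1 ∨ x = sElem := by revert x; decide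

lemma sElem_mul_sElem : sElem * sElem = 1 := by decide

lemma sElem_ne_one : sElem ≠ 1 := by decide

lemma jHom_one_apply (l : GL (Fin n) A × Aˣ) : jHom n A 1 l = l := by
  rw [_root_.map_one]; rfl

lemma jHom_sElem : jHom n A sElem = jAut n A := by
  show jAut n A ^ ((1 : ZMod 2)).val = jAut n A
  rw [show ((1 : ZMod 2)).val = 1 from rfl, pow_one]

lemma mk_mul (l l' : GL (Fin n) A × Aˣ) (h h' : Multiplicative (ZMod 2)) :
    (⟨l, h⟩ : Gn n A) * ⟨l', h'⟩ = ⟨l * jHom n A h l', h * h'⟩ := rfl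

lemma mem_G0_iff (x : Gn n A) : x ∈ G0 n A ↔ x.right = 1 := Iff.rfl

lemma gn_eta (x : Gn n A) : x = ⟨x.left, x.right⟩ := rfl

lemma left_mul_of_right_one (x y : Gn n A) (hx : x.right = 1) :
    (x * y).left = x.left * y.left := by
  rw [SemidirectProduct.mul_left, hx, jHom_one_apply]

lemma nu_of_right_one (x : Gn n A) (hx : x.right = 1) : nu n A x = x.left.2 := by
  show x.left.2 * (-1) ^ (Multiplicative.toAdd x.right).val = x.left.2
  rw [hx, show (Multiplicative.toAdd (1 : Multiplicative (ZMod 2))).val = 0 from rfl,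
    pow_zero, mul_one]

lemma nu_of_right_sElem (x : Gn n A) (hx : x.right = sElem) : nu n A x = -x.left.2 := by
  show x.left.2 * (-1) ^ (Multiplicative.toAdd x.right).val = -x.left.2
  rw [hx, show (Multiplicative.toAdd sElem).val = 1 from rfl, pow_one]
  simp

lemma jAut_apply (l : GL (Fin n) A × Aˣ) :
    jAut n A l = (scalarUnit n A l.2 * (transposeUnit n A l.1)⁻¹, l.2) := rfl

/-- `jElem` as a mk. -/
lemma jElem_eq : jElem n A = ⟨1, sElem⟩ := rfl

lemma inl_mul_jElem (l : GL (Fin n) A × Aˣ) :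
    SemidirectProduct.inl l * jElem n A = (⟨l, sElem⟩ : Gn n A) := by
  rw [jElem_eq, show SemidirectProduct.inl l = (⟨l, 1⟩ : Gn n A) from rfl, mk_mul,
    jHom_one_apply, mul_one, one_mul]


end Aux0

section Aux1

variable (n : ℕ) (A : Type*) [CommRing A]

/-- The bilinear pairing `(a, b) ↦ a ⬝ᵥ Q *ᵥ b` attached to a matrix `Q`. -/
def matPair (Q : Matrix (Fin n) (Fin n) A) :
    (Fin n → A) →ₗ[A] (Fin n → A) →ₗ[A] A where
  toFun a :=
    { toFun := fun b => a ⬝ᵥ Q *ᵥ b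
      map_add' := fun b b' => by simp [mulVec_add, dotProduct_add]
      map_smul' := fun x b => by simp [mulVec_smul, dotProduct_smul] }
  map_add' a a' := LinearMap.ext fun b => add_dotProduct a a' (Q *ᵥ b)
  map_smul' x a := LinearMap.ext fun b => smul_dotProduct x a (Q *ᵥ b)

@[simp] lemma matPair_apply (Q : Matrix (Fin n) (Fin n) A) (a b : Fin n → A) :
    matPair n A Q a b = a ⬝ᵥ Q *ᵥ b := rfl

lemma single_eq_ite (i : Fin n) : (Pi.single i 1 : Fin n → A) = fun j => if i = j then 1 else 0 := by
  funext j
  simp [Pi.single_apply, eq_comm]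

lemma matPair_eq_of_singles {Q Q' : Matrix (Fin n) (Fin n) A}
    (h : ∀ a b, a ⬝ᵥ Q *ᵥ b = a ⬝ᵥ Q' *ᵥ b) : Q = Q' := by
  ext i j
  have := h (Pi.single i 1) (Pi.single j 1)
  simpa [mulVec_single, single_dotProduct] using this

lemma dot_mulVec_mulVec (M K N : Matrix (Fin n) (Fin n) A) (a b : Fin n → A) :
    (M *ᵥ a) ⬝ᵥ K *ᵥ (N *ᵥ b) = a ⬝ᵥ (Mᵀ * K * N) *ᵥ b := by
  rw [dotProduct_mulVec, dotProduct_mulVec, ← vecMul_transpose, vecMul_vecMul, vecMul_vecMul,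
    ← dotProduct_mulVec, mul_assoc]

lemma matPair_bijective (Q : GL (Fin n) A) :
    Function.Bijective fun a : Fin n → A => matPair n A Q.val a := by
  have hv : ∀ x : Fin n → A, x ᵥ* Q.val = fun j => matPair n A Q.val x (Pi.single j 1) := by
    intro x
    funext j
    rw [matPair_apply, dotProduct_mulVec, dotProduct_single, mul_one]
  constructor
  · intro a a' h
    replace h : matPair n A Q.val a = matPair n A Q.val a' := h
    have h2 : a ᵥ* Q.val = a' ᵥ* Q.val := by rw [hv, hv, h]
    have h3 := congrArg (fun v => v ᵥ* Q.inv) h2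
    simpa [vecMul_vecMul, Q.val_inv] using h3
  · intro f
    refine ⟨(fun j => f (Pi.single j 1)) ᵥ* Q.inv, LinearMap.ext fun b => ?_⟩
    show matPair n A Q.val ((fun j => f (Pi.single j 1)) ᵥ* Q.inv) b = f b
    rw [matPair_apply, dotProduct_mulVec, vecMul_vecMul, Q.inv_val, vecMul_one,
      LinearMap.pi_apply_eq_sum_univ f b]
    simp [dotProduct, ← single_eq_ite, smul_eq_mul, mul_comm]

end Aux1

section Aux2

variable (n : ℕ) (A : Type*) [CommRing A]

lemma inv_scalarUnit (a : Aˣ) : (scalarUnit n A a)⁻¹ = scalarUnit n A a⁻¹ :=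
  (map_inv (Units.map (algebraMap A (Matrix (Fin n) (Fin n) A)).toMonoidHom) a).symm

lemma scalarUnit_one : scalarUnit n A 1 = 1 :=
  map_one (Units.map (algebraMap A (Matrix (Fin n) (Fin n) A)).toMonoidHom)

@[simp] lemma val_transposeUnit (g : GL (Fin n) A) :
    (transposeUnit n A g : Matrix (Fin n) (Fin n) A) = (g : Matrix (Fin n) (Fin n) A)ᵀ := rfl

@[simp] lemma val_scalarUnit (a : Aˣ) :
    (scalarUnit n A a : Matrix (Fin n) (Fin n) A) = (a : A) • (1 : Matrix (Fin n) (Fin n) A) := by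
  show algebraMap A (Matrix (Fin n) (Fin n) A) a = (a : A) • 1
  rw [Algebra.algebraMap_eq_smul_one]

lemma inv_transposeUnit (g : GL (Fin n) A) :
    (transposeUnit n A g)⁻¹ = transposeUnit n A g⁻¹ := (transposeUnit_inv n A g).symm

lemma scomm (a : Aˣ) (g : GL (Fin n) A) :
    scalarUnit n A a * g = g * scalarUnit n A a := (scalarUnit_commute n A a g).eq

lemma tmul_cancel (g : GL (Fin n) A) (M : Matrix (Fin n) (Fin n) A) :
    (g : Matrix (Fin n) (Fin n) A)ᵀ * (((g : Matrix (Fin n) (Fin n) A)⁻¹)ᵀ * M) = M := by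
  rw [← Matrix.mul_assoc, ← Matrix.transpose_mul, ← Matrix.coe_units_inv,
    ← Units.val_mul, inv_mul_cancel, Units.val_one, Matrix.transpose_one, Matrix.one_mul]

lemma tmul_cancel' (g : GL (Fin n) A) (M : Matrix (Fin n) (Fin n) A) :
    (((g : Matrix (Fin n) (Fin n) A)⁻¹)ᵀ) * ((g : Matrix (Fin n) (Fin n) A)ᵀ * M) = M := by
  rw [← Matrix.mul_assoc, ← Matrix.transpose_mul, ← Matrix.coe_units_inv,
    ← Units.val_mul, mul_inv_cancel, Units.val_one, Matrix.transpose_one, Matrix.one_mul]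

lemma tmul_cancel₂ (g : GL (Fin n) A) :
    (g : Matrix (Fin n) (Fin n) A)ᵀ * (((g : Matrix (Fin n) (Fin n) A)⁻¹)ᵀ) = 1 := by
  simpa using tmul_cancel n A g 1

lemma tmul_cancel₂' (g : GL (Fin n) A) :
    (((g : Matrix (Fin n) (Fin n) A)⁻¹)ᵀ) * (g : Matrix (Fin n) (Fin n) A)ᵀ = 1 := by
  simpa using tmul_cancel' n A g 1

lemma keyF1 (P : GL (Fin n) A) (ε : Aˣ)
    (hPP : P * (scalarUnit n A ε * (transposeUnit n A P)⁻¹) = 1) :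
    transposeUnit n A P = scalarUnit n A ε * P := by
  have h1 : scalarUnit n A ε * (transposeUnit n A P)⁻¹ = P⁻¹ :=
    eq_inv_of_mul_eq_one_right hPP
  have h2 : (transposeUnit n A P)⁻¹ = (scalarUnit n A ε)⁻¹ * P⁻¹ := by
    rw [← h1]; group
  calc transposeUnit n A P = ((transposeUnit n A P)⁻¹)⁻¹ := (inv_inv _).symm
    _ = ((scalarUnit n A ε)⁻¹ * P⁻¹)⁻¹ := by rw [h2]
    _ = P * scalarUnit n A ε := by rw [_root_.mul_inv_rev, inv_inv, inv_inv]
    _ = scalarUnit n A ε * P := (scomm n A ε P).symm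

lemma keyF2 (P g g' : GL (Fin n) A) (a ε : Aˣ) (e2 : ε * ε = 1)
    (tpP : transposeUnit n A P = scalarUnit n A ε * P)
    (hg' : g' = P * (scalarUnit n A a * (transposeUnit n A g)⁻¹) *
      (scalarUnit n A ε * (transposeUnit n A P)⁻¹)) :
    transposeUnit n A g * P⁻¹ * g' = scalarUnit n A a * P⁻¹ := by
  have einv : ε⁻¹ = ε := inv_eq_of_mul_eq_one_right e2
  have hε : (ε : A) * (ε : A) = 1 := by
    have := congrArg Units.val e2; push_cast at this; exact this
  subst hg'
  rw [tpP, _root_.mul_inv_rev, inv_scalarUnit, einv, inv_transposeUnit]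
  refine Units.ext ?_
  simp only [Units.val_mul, val_scalarUnit, val_transposeUnit]
  simp [mul_assoc, smul_smul, smul_mul_assoc, mul_smul_comm, Units.mul_inv_cancel_left,
    Units.inv_mul_cancel_left, hε, tmul_cancel, tmul_cancel', tmul_cancel₂, tmul_cancel₂']

lemma keyF3 (P : GL (Fin n) A) (ε : Aˣ) (e2 : ε * ε = 1)
    (tpP : transposeUnit n A P = scalarUnit n A ε * P) :
    transposeUnit n A P⁻¹ = scalarUnit n A ε * P⁻¹ := by
  have einv : ε⁻¹ = ε := inv_eq_of_mul_eq_one_right e2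
  rw [transposeUnit_inv, tpP, _root_.mul_inv_rev, inv_scalarUnit, einv, scomm]

lemma keyB1 (P g h : GL (Fin n) A) (a : Aˣ)
    (hEq : transposeUnit n A g * P⁻¹ * h = scalarUnit n A a * P⁻¹) :
    P * (scalarUnit n A a * (transposeUnit n A g)⁻¹) = h * P := by
  have hh : h = P * ((transposeUnit n A g)⁻¹ * (scalarUnit n A a * P⁻¹)) := by
    rw [← hEq]; group
  rw [hh, scomm n A a ((transposeUnit n A g)⁻¹)]
  group

lemma keyB2 (P g h : GL (Fin n) A) (ε b : Aˣ) (e2 : ε * ε = 1)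
    (tpP : transposeUnit n A P = scalarUnit n A ε * P)
    (hEq : transposeUnit n A g * P⁻¹ * h = scalarUnit n A (b * ε) * P⁻¹) :
    P * (scalarUnit n A b * (transposeUnit n A (g * P))⁻¹) = h := by
  have einv : ε⁻¹ = ε := inv_eq_of_mul_eq_one_right e2
  have hε : (ε : A) * (ε : A) = 1 := by
    have := congrArg Units.val e2; push_cast at this; exact this
  have hh : h = P * ((transposeUnit n A g)⁻¹ * (scalarUnit n A (b * ε) * P⁻¹)) := by
    rw [← hEq]; group
  rw [hh, transposeUnit_mul, _root_.mul_inv_rev, tpP, _root_.mul_inv_rev, inv_scalarUnit,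
    einv, inv_transposeUnit]
  refine Units.ext ?_
  simp only [Units.val_mul, val_scalarUnit, val_transposeUnit, Units.val_inv_eq_inv_val]
  simp [mul_assoc, smul_smul, smul_mul_assoc, mul_smul_comm, Units.mul_inv_cancel_left,
    Units.inv_mul_cancel_left, hε, tmul_cancel, tmul_cancel', tmul_cancel₂, tmul_cancel₂',
    mul_comm]

lemma val_of_scal_eq (X Y : GL (Fin n) A) (a : Aˣ) (h : X = scalarUnit n A a * Y) :
    (X : Matrix (Fin n) (Fin n) A) = (a : A) • (Y : Matrix (Fin n) (Fin n) A) := by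
  rw [h, Units.val_mul, val_scalarUnit, smul_mul_assoc, Matrix.one_mul]

lemma pair_smul_of_unit_eq (P' g g' : GL (Fin n) A) (a : Aˣ)
    (h : transposeUnit n A g * P' * g' = scalarUnit n A a * P') (x y : Fin n → A) :
    ((g : Matrix (Fin n) (Fin n) A) *ᵥ x) ⬝ᵥ (P' : Matrix (Fin n) (Fin n) A) *ᵥ
      ((g' : Matrix (Fin n) (Fin n) A) *ᵥ y)
      = (a : A) * (x ⬝ᵥ (P' : Matrix (Fin n) (Fin n) A) *ᵥ y) := by
  have hv : (g : Matrix (Fin n) (Fin n) A)ᵀ * (P' : Matrix (Fin n) (Fin n) A) *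
      (g' : Matrix (Fin n) (Fin n) A) = (a : A) • (P' : Matrix (Fin n) (Fin n) A) := by
    have := congrArg Units.val h
    simp only [Units.val_mul, val_scalarUnit, val_transposeUnit, smul_mul_assoc,
      Matrix.one_mul] at this
    exact this
  rw [dot_mulVec_mulVec, hv, smul_mulVec, dotProduct_smul, smul_eq_mul]

lemma dot_swap (M : Matrix (Fin n) (Fin n) A) (x y : Fin n → A) :
    y ⬝ᵥ M *ᵥ x = x ⬝ᵥ Mᵀ *ᵥ y := by
  rw [dotProduct_mulVec, ← mulVec_transpose, dotProduct_comm]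

lemma skew_of_transpose_eq (P' : GL (Fin n) A) (ε : Aˣ)
    (h : transposeUnit n A P' = scalarUnit n A ε * P') (x y : Fin n → A) :
    y ⬝ᵥ (P' : Matrix (Fin n) (Fin n) A) *ᵥ x
      = (ε : A) * (x ⬝ᵥ (P' : Matrix (Fin n) (Fin n) A) *ᵥ y) := by
  have hv : (P' : Matrix (Fin n) (Fin n) A)ᵀ = (ε : A) • (P' : Matrix (Fin n) (Fin n) A) :=
    val_of_scal_eq n A _ _ _ h
  rw [dot_swap, hv, smul_mulVec, dotProduct_smul, smul_eq_mul]


end Aux2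

section Aux3

variable (n : ℕ) (A : Type*) [CommRing A]
variable {Γ : Type*} [Group Γ] {Δ : Subgroup Γ} {c : Γ}

section Forward
variable (r : Γ →* Gn n A)

lemma right_eq_one_of_mem (hr : ∀ γ : Γ, r γ ∈ G0 n A ↔ γ ∈ Δ) {γ : Γ} (hγ : γ ∈ Δ) :
    (r γ).right = 1 := (mem_G0_iff n A _).1 ((hr γ).2 hγ)

lemma right_eq_sElem_of_notMem (hr : ∀ γ : Γ, r γ ∈ G0 n A ↔ γ ∈ Δ) {γ : Γ} (hγ : γ ∉ Δ) :
    (r γ).right = sElem := by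
  rcases sElem_cases (r γ).right with h | h
  · exact absurd ((hr γ).1 ((mem_G0_iff n A _).2 h)) hγ
  · exact h

lemma r_decomp {γ : Γ} {x : Multiplicative (ZMod 2)} (h1 : (r γ).right = x) :
    r γ = ⟨((r γ).left.1, (r γ).left.2), x⟩ := by rw [← h1]

/-- The `GLₙ`-component of `r` restricted to `Δ`, as a group homomorphism. -/
def rhoOf (hr : ∀ γ : Γ, r γ ∈ G0 n A ↔ γ ∈ Δ) : Δ →* GL (Fin n) A where
  toFun δ := (r (δ : Γ)).left.1
  map_one' := by
    show (r ((1 : Δ) : Γ)).left.1 = 1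
    rw [OneMemClass.coe_one, _root_.map_one r]
    rfl
  map_mul' δ δ' := by
    show (r ↑(δ * δ')).left.1 = (r (δ : Γ)).left.1 * (r (δ' : Γ)).left.1
    rw [Subgroup.coe_mul, _root_.map_mul r, left_mul_of_right_one n A _ _
      (right_eq_one_of_mem n A r hr δ.2), Prod.fst_mul]

variable (hΔ : Δ.index = 2) (hc : c ∉ Δ) (hc2 : c * c = 1)
variable (hr : ∀ γ : Γ, r γ ∈ G0 n A ↔ γ ∈ Δ)

section
include hc hc2 hr

omit hc2 in
lemma r_c_decomp : r c = ⟨((r c).left.1, (r c).left.2), sElem⟩ :=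
  r_decomp n A r (right_eq_sElem_of_notMem n A r hr hc)

lemma r_c_sq :
    (r c).left.1 * (scalarUnit n A (r c).left.2 * (transposeUnit n A (r c).left.1)⁻¹) = 1 ∧
      (r c).left.2 * (r c).left.2 = 1 := by
  have h1 : r c * r c = 1 := by rw [← _root_.map_mul r, hc2, _root_.map_one r]
  rw [r_c_decomp n A r hc hr, mk_mul, jHom_sElem, jAut_apply, Prod.mk_mul_mk,
    sElem_mul_sElem] at h1
  have h2 := congrArg SemidirectProduct.left h1
  simp only [SemidirectProduct.one_left] at h2
  exact ⟨congrArg Prod.fst h2, congrArg Prod.snd h2⟩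

lemma r_tpP : transposeUnit n A (r c).left.1
    = scalarUnit n A (r c).left.2 * (r c).left.1 :=
  keyF1 n A _ _ (r_c_sq n A r hc hc2 hr).1

lemma r_conj_left {δ δ' : Δ} (hcond : (δ' : Γ) = c * (δ : Γ) * c) :
    (r (δ' : Γ)).left.1 =
      (r c).left.1 * (scalarUnit n A (r (δ : Γ)).left.2 *
        (transposeUnit n A (r (δ : Γ)).left.1)⁻¹) *
      (scalarUnit n A (r c).left.2 * (transposeUnit n A (r c).left.1)⁻¹) := by
  have hδ1 : (r (δ : Γ)).right = 1 := right_eq_one_of_mem n A r hr δ.2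
  have h1 : r (δ' : Γ) = r c * r (δ : Γ) * r c := by
    rw [hcond, _root_.map_mul r, _root_.map_mul r]
  rw [r_c_decomp n A r hc hr, r_decomp n A r hδ1] at h1
  simp only [mk_mul, jAut_apply, Prod.mk_mul_mk, mul_one, jHom_sElem, jHom_one_apply,
    sElem_mul_sElem] at h1
  simpa using congrArg (fun x => x.left.1) h1

/-- The triple attached to a homomorphism `r : Γ → 𝒢ₙ(A)`. -/
def toTriple : GnTriple n A Δ c where
  ρ := rhoOf n A r hr
  η := (nu n A).comp r
  pair := matPair n A (((r c).left.1)⁻¹ : GL (Fin n) A)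
  perfect := matPair_bijective n A ((r c).left.1)⁻¹
  compat := by
    intro δ δ' hcond a b
    have hkey := keyF2 n A (r c).left.1 (r (δ : Γ)).left.1 (r (δ' : Γ)).left.1
      (r (δ : Γ)).left.2 (r c).left.2 (r_c_sq n A r hc hc2 hr).2
      (r_tpP n A r hc hc2 hr) (r_conj_left n A r hc hc2 hr hcond)
    have hps := pair_smul_of_unit_eq n A ((r c).left.1)⁻¹ _ _ _ hkey a b
    show ((r (δ : Γ)).left.1.val *ᵥ a) ⬝ᵥ (((r c).left.1)⁻¹ : GL (Fin n) A).val *ᵥ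
        ((r (δ' : Γ)).left.1.val *ᵥ b) = _
    rw [hps, show (((nu n A).comp r) (δ : Γ)) = (r (δ : Γ)).left.2 from
      nu_of_right_one n A _ (right_eq_one_of_mem n A r hr δ.2)]
    rfl
  skew := by
    intro a b
    have hεc : -(((nu n A).comp r) c) = (r c).left.2 := by
      rw [MonoidHom.comp_apply,
        nu_of_right_sElem n A _ (right_eq_sElem_of_notMem n A r hr hc), neg_neg]
    have hε : ((r c).left.2 : A) * ((r c).left.2 : A) = 1 := by
      have := congrArg Units.val (r_c_sq n A r hc hc2 hr).2; push_cast at this; exact this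
    have hskew := skew_of_transpose_eq n A ((r c).left.1)⁻¹ (r c).left.2
      (keyF3 n A _ _ (r_c_sq n A r hc hc2 hr).2 (r_tpP n A r hc hc2 hr)) a b
    have h2 : -((((nu n A).comp r) c : Aˣ) : A) = ((r c).left.2 : A) := by
      rw [← Units.val_neg, hεc]
    show a ⬝ᵥ (((r c).left.1)⁻¹ : GL (Fin n) A).val *ᵥ b
      = -((((nu n A).comp r) c : Aˣ) : A) *
        (b ⬝ᵥ (((r c).left.1)⁻¹ : GL (Fin n) A).val *ᵥ a)
    rw [h2, hskew, ← mul_assoc, hε, one_mul]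

end
end Forward

end Aux3

section Aux4

variable (n : ℕ) (A : Type*) [CommRing A]
variable {Γ : Type*} [Group Γ] {Δ : Subgroup Γ} {c : Γ}

section Backward
variable (T : GnTriple n A Δ c)

/-- The Gram matrix of the pairing of a triple. -/
def QTmat : Matrix (Fin n) (Fin n) A :=
  Matrix.of fun i j => T.pair (Pi.single i 1) (Pi.single j 1)

lemma pair_eq_QTmat (a b : Fin n → A) : T.pair a b = a ⬝ᵥ QTmat n A T *ᵥ b := by
  have hb : ∀ v : Fin n → A, T.pair v b = ∑ j, b j * T.pair v (Pi.single j 1) := by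
    intro v
    have := LinearMap.pi_apply_eq_sum_univ (T.pair v) b
    simpa [← single_eq_ite, smul_eq_mul] using this
  have ha : T.pair a b = ∑ i, a i * T.pair (Pi.single i 1) b := by
    have := LinearMap.pi_apply_eq_sum_univ (T.pair.flip b) a
    simpa [← single_eq_ite, smul_eq_mul, LinearMap.flip_apply] using this
  rw [ha]
  simp only [hb]
  simp only [QTmat, dotProduct, mulVec, of_apply, Finset.mul_sum]
  exact Finset.sum_congr rfl fun i _ => Finset.sum_congr rfl fun j _ => by ring

lemma isUnit_QTmat : IsUnit (QTmat n A T) := by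
  rw [← Matrix.vecMul_surjective_iff_isUnit]
  intro v
  obtain ⟨a, ha⟩ := T.perfect.2 (matPair n A 1 v)
  refine ⟨a, funext fun j => ?_⟩
  have h1 := congrArg (fun f => f (Pi.single j 1)) ha
  simp only [matPair_apply, Matrix.one_mulVec] at h1
  have h2 : T.pair a (Pi.single j 1) = v ⬝ᵥ Pi.single j 1 := h1
  rw [pair_eq_QTmat, dotProduct_mulVec, dotProduct_single, dotProduct_single,
    mul_one, mul_one] at h2
  exact h2

/-- The Gram matrix as an invertible matrix. -/
noncomputable def QU : GL (Fin n) A := (isUnit_QTmat n A T).unit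

@[simp] lemma QU_val : (QU n A T).val = QTmat n A T := (isUnit_QTmat n A T).unit_spec

/-- The matrix `P` with `r(c) = (P, -η(c))·j`. -/
noncomputable def PU : GL (Fin n) A := (QU n A T)⁻¹

variable (hΔ : Δ.index = 2) (hc : c ∉ Δ) (hc2 : c * c = 1)

section
include hc2

lemma eta_c_sq : T.η c * T.η c = 1 := by rw [← _root_.map_mul T.η, hc2, _root_.map_one]

lemma e2T : (-T.η c) * (-T.η c) = 1 := by rw [neg_mul_neg]; exact eta_c_sq n A T hc2

end

lemma QU_eq : QU n A T = scalarUnit n A (-T.η c) * transposeUnit n A (QU n A T) := by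
  refine Units.ext ?_
  simp only [Units.val_mul, val_scalarUnit, val_transposeUnit, QU_val, smul_mul_assoc, one_mul]
  refine matPair_eq_of_singles n A fun a b => ?_
  rw [smul_mulVec, dotProduct_smul, smul_eq_mul, ← dot_swap, ← pair_eq_QTmat,
    ← pair_eq_QTmat, T.skew a b, Units.val_neg]

include hc2 in
lemma tpP_T : transposeUnit n A (PU n A T) = scalarUnit n A (-T.η c) * PU n A T := by
  have h1 : transposeUnit n A (QU n A T) = (scalarUnit n A (-T.η c))⁻¹ * QU n A T := by
    conv_rhs => rw [QU_eq n A T]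
    group
  rw [show PU n A T = (QU n A T)⁻¹ from rfl, transposeUnit_inv, h1, _root_.mul_inv_rev,
    inv_inv, ← scomm]

lemma unitEq1 (δ δ' : Δ) (h : (δ' : Γ) = c * (δ : Γ) * c) :
    transposeUnit n A (T.ρ δ) * (PU n A T)⁻¹ * T.ρ δ'
      = scalarUnit n A (T.η ↑δ) * (PU n A T)⁻¹ := by
  rw [show (PU n A T)⁻¹ = QU n A T from inv_inv _]
  refine Units.ext ?_
  simp only [Units.val_mul, val_transposeUnit, val_scalarUnit, QU_val, smul_mul_assoc, one_mul]
  refine matPair_eq_of_singles n A fun a b => ?_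
  rw [← dot_mulVec_mulVec, smul_mulVec, dotProduct_smul, smul_eq_mul,
    ← pair_eq_QTmat, ← pair_eq_QTmat]
  exact T.compat δ δ' h a b

end Backward

end Aux4

section Aux5

variable (n : ℕ) (A : Type*) [CommRing A]
variable {Γ : Type*} [Group Γ] {Δ : Subgroup Γ} {c : Γ}

section BHom
variable (hΔ : Δ.index = 2) (hc : c ∉ Δ) (hc2 : c * c = 1)

lemma memI (hΔ : Δ.index = 2) (hc : c ∉ Δ) {γ : Γ} (h : γ ∉ Δ) : γ * c ∈ Δ :=
  (Subgroup.mul_mem_iff_of_index_two hΔ).2 (iff_of_false h hc)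

lemma memII (hΔ : Δ.index = 2) (hc : c ∉ Δ) {γ : Γ} (h : γ ∉ Δ) : c * γ ∈ Δ :=
  (Subgroup.mul_mem_iff_of_index_two hΔ).2 (iff_of_false hc h)

lemma notmem_mul_left (hΔ : Δ.index = 2) {γ γ' : Γ} (h : γ ∈ Δ) (h' : γ' ∉ Δ) :
    γ * γ' ∉ Δ := fun hm => h' (((Subgroup.mul_mem_iff_of_index_two hΔ).1 hm).1 h)

lemma notmem_mul_right (hΔ : Δ.index = 2) {γ γ' : Γ} (h : γ ∉ Δ) (h' : γ' ∈ Δ) :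
    γ * γ' ∉ Δ := fun hm => h (((Subgroup.mul_mem_iff_of_index_two hΔ).1 hm).2 h')

lemma mem_mul_of_not (hΔ : Δ.index = 2) {γ γ' : Γ} (h : γ ∉ Δ) (h' : γ' ∉ Δ) :
    γ * γ' ∈ Δ := (Subgroup.mul_mem_iff_of_index_two hΔ).2 (iff_of_false h h')

variable (T : GnTriple n A Δ c)

lemma rho_congr {x y : Γ} (h : x = y) (hx : x ∈ Δ) :
    T.ρ ⟨x, hx⟩ = T.ρ ⟨y, h ▸ hx⟩ := by subst h; rfl

lemma rho_mul (x y : Γ) (hx : x ∈ Δ) (hy : y ∈ Δ) :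
    T.ρ ⟨x * y, mul_mem hx hy⟩ = T.ρ ⟨x, hx⟩ * T.ρ ⟨y, hy⟩ := by
  rw [← _root_.map_mul T.ρ]; rfl

open scoped Classical in
/-- The homomorphism `Γ → 𝒢ₙ(A)` attached to a triple. -/
noncomputable def bHom : Γ →* Gn n A where
  toFun γ :=
    if h : γ ∈ Δ then ⟨(T.ρ ⟨γ, h⟩, T.η γ), 1⟩
    else ⟨(T.ρ ⟨γ * c, memI hΔ hc h⟩ * PU n A T, -T.η γ), sElem⟩
  map_one' := by
    rw [dif_pos (one_mem Δ)]
    have h1 : (⟨(1 : Γ), one_mem Δ⟩ : Δ) = 1 := rfl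
    rw [h1, _root_.map_one T.ρ, _root_.map_one T.η]
    rfl
  map_mul' γ γ' := by
    have hcc : ∀ x : Γ, c * (c * x) = x := fun x => by rw [← mul_assoc, hc2, one_mul]
    have hxc : ∀ x : Γ, x * c * c = x := fun x => by rw [mul_assoc, hc2, mul_one]
    by_cases h : γ ∈ Δ <;> by_cases h' : γ' ∈ Δ
    · -- both in Δ
      have hm : γ * γ' ∈ Δ := mul_mem h h'
      rw [dif_pos hm, dif_pos h, dif_pos h', mk_mul, jHom_one_apply, Prod.mk_mul_mk, mul_one,
        rho_mul n A T γ γ' h h', _root_.map_mul T.η]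
    · -- γ ∈ Δ, γ' ∉ Δ
      have hm : γ * γ' ∉ Δ := notmem_mul_left hΔ h h'
      rw [dif_neg hm, dif_pos h, dif_neg h', mk_mul, jHom_one_apply, Prod.mk_mul_mk, one_mul,
        rho_congr n A T (mul_assoc γ γ' c) _, rho_mul n A T γ (γ' * c) h (memI hΔ hc h'),
        _root_.map_mul T.η, mul_neg, mul_assoc]
    · -- γ ∉ Δ, γ' ∈ Δ
      have hm : γ * γ' ∉ Δ := notmem_mul_right hΔ h h'
      have hδ' : ((⟨c * γ' * c, memI hΔ hc (notmem_mul_right hΔ hc h')⟩ : Δ) : Γ)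
          = c * ((⟨γ', h'⟩ : Δ) : Γ) * c := rfl
      have hkey := keyB1 n A (PU n A T) (T.ρ ⟨γ', h'⟩)
        (T.ρ ⟨c * γ' * c, memI hΔ hc (notmem_mul_right hΔ hc h')⟩) (T.η γ')
        (unitEq1 n A T _ _ hδ')
      rw [dif_neg hm, dif_neg h, dif_pos h', mk_mul, jHom_sElem, jAut_apply, Prod.mk_mul_mk,
        mul_one]
      have hfst : T.ρ ⟨γ * γ' * c, memI hΔ hc hm⟩ * PU n A T =
          T.ρ ⟨γ * c, memI hΔ hc h⟩ * PU n A T *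
            (scalarUnit n A (T.η γ') * (transposeUnit n A (T.ρ ⟨γ', h'⟩))⁻¹) := by
        rw [mul_assoc (T.ρ ⟨γ * c, memI hΔ hc h⟩) (PU n A T), hkey,
          ← mul_assoc (T.ρ ⟨γ * c, memI hΔ hc h⟩)
            (T.ρ ⟨c * γ' * c, memI hΔ hc (notmem_mul_right hΔ hc h')⟩) (PU n A T),
          ← rho_mul n A T (γ * c) (c * γ' * c) (memI hΔ hc h)
            (memI hΔ hc (notmem_mul_right hΔ hc h'))]
        exact congrArg (fun u => T.ρ u * PU n A T)
          (Subtype.ext (show γ * γ' * c = γ * c * (c * γ' * c) by simp [mul_assoc, hcc]))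
      rw [hfst, _root_.map_mul T.η, neg_mul]
    · -- both not in Δ
      have hm : γ * γ' ∈ Δ := mem_mul_of_not hΔ h h'
      have hδ' : ((⟨c * γ', memII hΔ hc h'⟩ : Δ) : Γ)
          = c * ((⟨γ' * c, memI hΔ hc h'⟩ : Δ) : Γ) * c := by
        show c * γ' = c * (γ' * c) * c
        simp [mul_assoc, hcc, hc2]
      have hEq := unitEq1 n A T _ _ hδ'
      rw [show T.η ↑(⟨γ' * c, memI hΔ hc h'⟩ : Δ) = -T.η γ' * -T.η c by
        rw [_root_.map_mul T.η, neg_mul_neg]] at hEq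
      have hkey := keyB2 n A (PU n A T) (T.ρ ⟨γ' * c, memI hΔ hc h'⟩)
        (T.ρ ⟨c * γ', memII hΔ hc h'⟩) (-T.η c) (-T.η γ') (e2T n A T hc2)
        (tpP_T n A T hc2) hEq
      rw [dif_pos hm, dif_neg h, dif_neg h', mk_mul, jHom_sElem, jAut_apply, Prod.mk_mul_mk,
        sElem_mul_sElem]
      have hfst : T.ρ ⟨γ * γ', hm⟩ =
          T.ρ ⟨γ * c, memI hΔ hc h⟩ * PU n A T *
            (scalarUnit n A (-T.η γ') *
              (transposeUnit n A (T.ρ ⟨γ' * c, memI hΔ hc h'⟩ * PU n A T))⁻¹) := by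
        rw [mul_assoc (T.ρ ⟨γ * c, memI hΔ hc h⟩) (PU n A T), hkey,
          ← rho_mul n A T (γ * c) (c * γ') (memI hΔ hc h) (memII hΔ hc h')]
        exact congrArg T.ρ
          (Subtype.ext (show γ * γ' = γ * c * (c * γ') by simp [mul_assoc, hcc]))
      rw [hfst, _root_.map_mul T.η, neg_mul_neg]

lemma bHom_apply_of_mem {γ : Γ} (h : γ ∈ Δ) :
    bHom n A hΔ hc hc2 T γ = ⟨(T.ρ ⟨γ, h⟩, T.η γ), 1⟩ := by
  simp only [bHom, MonoidHom.coe_mk, OneHom.coe_mk, dif_pos h]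

lemma bHom_apply_of_notMem {γ : Γ} (h : γ ∉ Δ) :
    bHom n A hΔ hc hc2 T γ
      = ⟨(T.ρ ⟨γ * c, memI hΔ hc h⟩ * PU n A T, -T.η γ), sElem⟩ := by
  simp only [bHom, MonoidHom.coe_mk, OneHom.coe_mk, dif_neg h]

lemma bHom_mem_G0_iff (γ : Γ) : bHom n A hΔ hc hc2 T γ ∈ G0 n A ↔ γ ∈ Δ := by
  rw [mem_G0_iff]
  by_cases h : γ ∈ Δ
  · rw [bHom_apply_of_mem n A hΔ hc hc2 T h]
    exact iff_of_true rfl h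
  · rw [bHom_apply_of_notMem n A hΔ hc hc2 T h]
    exact iff_of_false sElem_ne_one h

end BHom

end Aux5

section Aux6

variable (n : ℕ) (A : Type*) [CommRing A]
variable {Γ : Type*} [Group Γ] {Δ : Subgroup Γ} {c : Γ}

lemma GnTriple.ext' {T1 T2 : GnTriple n A Δ c} (h1 : T1.ρ = T2.ρ) (h2 : T1.η = T2.η)
    (h3 : T1.pair = T2.pair) : T1 = T2 := by
  cases T1; cases T2
  dsimp at h1 h2 h3
  subst h1; subst h2; subst h3
  rfl

lemma QTmat_toTriple (r : Γ →* Gn n A) (hc : c ∉ Δ) (hc2 : c * c = 1)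
    (hr : ∀ γ : Γ, r γ ∈ G0 n A ↔ γ ∈ Δ) :
    QTmat n A (toTriple n A r hc hc2 hr)
      = ((((r c).left.1)⁻¹ : GL (Fin n) A) : Matrix (Fin n) (Fin n) A) := by
  ext i j
  show matPair n A ((((r c).left.1)⁻¹ : GL (Fin n) A) : Matrix (Fin n) (Fin n) A)
    (Pi.single i 1) (Pi.single j 1) = _
  simp [matPair_apply, mulVec_single, dotProduct_single]

lemma PU_toTriple (r : Γ →* Gn n A) (hc : c ∉ Δ) (hc2 : c * c = 1)
    (hr : ∀ γ : Γ, r γ ∈ G0 n A ↔ γ ∈ Δ) :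
    PU n A (toTriple n A r hc hc2 hr) = (r c).left.1 := by
  have hq : QU n A (toTriple n A r hc hc2 hr) = ((r c).left.1)⁻¹ :=
    Units.ext (by rw [QU_val, QTmat_toTriple n A r hc hc2 hr])
  show (QU n A (toTriple n A r hc hc2 hr))⁻¹ = (r c).left.1
  rw [hq, inv_inv]


end Aux6

/-- (Part of) Lemma 2.1.1 of Clozel–Harris–Taylor: for a group `Γ` with an index-two
subgroup `Δ` and `c ∈ Γ ∖ Δ` with `c² = 1`, continuous homomorphisms `r : Γ → 𝒢ₙ(A)`
with `r⁻¹(𝒢ₙ⁰(A)) = Δ` are in natural bijection with triples `(ρ, η, ⟨·,·⟩)` as above;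
under this bijection `ρ(δ)` is the `GLₙ`-component of `r(δ)`, `η = ν ∘ r`,
`r(c) = (P, −η(c))·j`, and `⟨a, b⟩ = ᵗa·P⁻¹·b`. -/
theorem gn_hom_equiv_triple (n : ℕ) (hn : 1 ≤ n) (A : Type*) [CommRing A]
    (Γ : Type*) [Group Γ] (Δ : Subgroup Γ) (hΔ : Δ.index = 2)
    (c : Γ) (hc : c ∉ Δ) (hc2 : c * c = 1) :
    ∃ e : {r : Γ →* Gn n A // ∀ γ : Γ, r γ ∈ G0 n A ↔ γ ∈ Δ} ≃ GnTriple n A Δ c,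
      ∀ r, (∀ δ : Δ, (e r).ρ δ = (r.1 (δ : Γ)).left.1) ∧
        (∀ γ : Γ, (e r).η γ = nu n A (r.1 γ)) ∧
        (r.1 c = SemidirectProduct.inl ((r.1 c).left.1, -((e r).η c)) * jElem n A) ∧
        (∀ a b : Fin n → A,
          (e r).pair a b = a ⬝ᵥ ((((r.1 c).left.1)⁻¹).val.mulVec b)) := by
  have hxc : ∀ x : Γ, x * c * c = x := fun x => by rw [mul_assoc, hc2, mul_one]
  refine ⟨⟨fun r => toTriple n A r.1 hc hc2 r.2,
    fun T => ⟨bHom n A hΔ hc hc2 T, bHom_mem_G0_iff n A hΔ hc hc2 T⟩, ?_, ?_⟩, ?_⟩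
  · -- left inverse
    rintro ⟨r, hr⟩
    refine Subtype.ext (MonoidHom.ext fun γ => ?_)
    by_cases h : γ ∈ Δ
    · rw [bHom_apply_of_mem n A hΔ hc hc2 _ h]
      have h1 : (toTriple n A r hc hc2 hr).ρ ⟨γ, h⟩ = (r γ).left.1 := rfl
      have h2 : (toTriple n A r hc hc2 hr).η γ = nu n A (r γ) := rfl
      rw [h1, h2, nu_of_right_one n A _ (right_eq_one_of_mem n A r hr h)]
      exact (r_decomp n A r (right_eq_one_of_mem n A r hr h)).symm
    · rw [bHom_apply_of_notMem n A hΔ hc hc2 _ h]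
      have hPU : PU n A (toTriple n A r hc hc2 hr) = (r c).left.1 :=
        PU_toTriple n A r hc hc2 hr
      have hρ : (toTriple n A r hc hc2 hr).ρ ⟨γ * c, memI hΔ hc h⟩
          = (r (γ * c)).left.1 := rfl
      have hη : (toTriple n A r hc hc2 hr).η γ = nu n A (r γ) := rfl
      rw [hPU, hρ, hη]
      have hsplit : r γ = r (γ * c) * r c := by rw [← _root_.map_mul r, hxc]
      have hgc1 : (r (γ * c)).right = 1 := right_eq_one_of_mem n A r hr (memI hΔ hc h)
      have hν : -(nu n A (r γ)) = (r (γ * c)).left.2 * (r c).left.2 := by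
        rw [hsplit, _root_.map_mul (nu n A), nu_of_right_one n A _ hgc1,
          nu_of_right_sElem n A _ (right_eq_sElem_of_notMem n A r hr hc), mul_neg, neg_neg]
      rw [hν]
      conv_rhs => rw [hsplit, r_decomp n A r hgc1, r_c_decomp n A r hc hr, mk_mul,
        jHom_one_apply, Prod.mk_mul_mk, one_mul]
  · -- right inverse
    intro T
    refine GnTriple.ext' n A ?_ ?_ ?_
    · refine MonoidHom.ext fun δ => ?_
      show ((bHom n A hΔ hc hc2 T) (δ : Γ)).left.1 = T.ρ δ
      rw [bHom_apply_of_mem n A hΔ hc hc2 T δ.2]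
    · refine MonoidHom.ext fun γ => ?_
      show nu n A ((bHom n A hΔ hc hc2 T) γ) = T.η γ
      by_cases h : γ ∈ Δ
      · rw [bHom_apply_of_mem n A hΔ hc hc2 T h, nu_of_right_one n A _ rfl]
      · rw [bHom_apply_of_notMem n A hΔ hc hc2 T h, nu_of_right_sElem n A _ rfl]
        exact neg_neg _
    · have hbc : ((bHom n A hΔ hc hc2 T) c).left.1 = PU n A T := by
        rw [bHom_apply_of_notMem n A hΔ hc hc2 T hc]
        show T.ρ ⟨c * c, _⟩ * PU n A T = PU n A T
        rw [show (⟨c * c, memI hΔ hc hc⟩ : Δ) = 1 from Subtype.ext hc2,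
          _root_.map_one T.ρ, one_mul]
      refine LinearMap.ext fun a => LinearMap.ext fun b => ?_
      show a ⬝ᵥ (((((bHom n A hΔ hc hc2 T) c).left.1)⁻¹ : GL (Fin n) A) :
          Matrix (Fin n) (Fin n) A) *ᵥ b = T.pair a b
      rw [hbc, show (PU n A T)⁻¹ = QU n A T from inv_inv _, QU_val, ← pair_eq_QTmat]
  · -- properties
    rintro ⟨r, hr⟩
    refine ⟨fun δ => rfl, fun γ => rfl, ?_, fun a b => rfl⟩
    show r c = SemidirectProduct.inl ((r c).left.1,
      -((toTriple n A r hc hc2 hr).η c)) * jElem n A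
    rw [inl_mul_jElem]
    have hε : -((toTriple n A r hc hc2 hr).η c) = (r c).left.2 := by
      show -(nu n A (r c)) = _
      rw [nu_of_right_sElem n A _ (right_eq_sElem_of_notMem n A r hr hc), neg_neg]
    rw [hε]
    exact r_c_decomp n A r hc hr


end CHT
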